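/- Fix λ > 0 and a positive integer n, let r(y) = y^2 e^{-y}/(1 - e^{-y}) for y > 0, and let y_max be the unique maximizer of r on (0, ∞). Set x* = min(1/n, y_max/λ). Then for every finite Borel measure μ on (0, 1] with μ((0,1]) = n and ∫ x dμ(x) ≤ 1, one has ∫ x^2 e^{-λx}/(1 - e^{-λx}) dμ(x) ≤ n (x*)^2 e^{-λ x*}/(1 - e^{-λ x*}); moreover the measure n·δ_{x*} itself satisfies these constraints, so the one-atom design μ* = n·δ_{x*} maximizes the Fisher information I(μ; λ) = ∫ x^2 e^{-λx}/(1 - e^{-λx}) dμ(x) among all admissible design measures. In particular, the optimal design consists of n equal doses of volume 1/n when λ ≤ y_max·n and of volume y_max/λ when λ > y_max·n. -/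

import Mathlib

open MeasureTheory Set
open scoped ENNReal

lemma expneg_ge_lin (t : ℝ) : 1 - t ≤ Real.exp (-t) := by
  have := Real.add_one_le_exp (-t); linarith

lemma expneg_le_quad {t : ℝ} (ht : 0 ≤ t) : Real.exp (-t) ≤ 1 - t + t^2/2 := by
  have hmono : Monotone (fun t : ℝ => 1 - t + t^2/2 - Real.exp (-t)) := by
    apply monotone_of_hasDerivAt_nonneg (f' := fun t => -1 + t + Real.exp (-t))
    · intro x
      have h1 : HasDerivAt (fun t : ℝ => Real.exp (-t)) (-Real.exp (-x)) x := by
        exact (hasDerivAt_neg x).exp.congr_deriv (by ring)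
      have h2 : HasDerivAt (fun t : ℝ => 1 - t + t^2/2) (-1 + x) x := by
        have : HasDerivAt (fun t : ℝ => 1 - t + t^2/2) (0 - 1 + 2*x^1/2) x := by
          exact (((hasDerivAt_const x (1:ℝ)).sub (hasDerivAt_id x)).add
            ((hasDerivAt_pow 2 x).div_const 2)).congr_deriv (by norm_num)
        simpa using this.congr_deriv (by ring)
      exact (h2.sub h1).congr_deriv (by ring)
    · intro x
      have := expneg_ge_lin x
      simp only [Pi.zero_apply]
      linarith
  have := hmono ht
  simp at this
  linarith

lemma expneg_ge_cubic {t : ℝ} (ht : 0 ≤ t) :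
    1 - t + t^2/2 - t^3/6 ≤ Real.exp (-t) := by
  have key : MonotoneOn (fun t : ℝ => Real.exp (-t) - (1 - t + t^2/2 - t^3/6)) (Ici 0) := by
    apply monotoneOn_of_hasDerivWithinAt_nonneg (convex_Ici 0)
      (f' := fun t => -Real.exp (-t) + (1 - t + t^2/2))
    · apply Continuous.continuousOn; continuity
    · intro x hx
      have h1 : HasDerivAt (fun t : ℝ => Real.exp (-t)) (-Real.exp (-x)) x := by
        exact (hasDerivAt_neg x).exp.congr_deriv (by ring)
      have h2 : HasDerivAt (fun t : ℝ => 1 - t + t^2/2 - t^3/6)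
          (-(1 : ℝ) + x - x^2/2) x := by
        have : HasDerivAt (fun t : ℝ => 1 - t + t^2/2 - t^3/6)
            (0 - 1 + 2*x^1/2 - 3*x^2/6) x :=
          (((hasDerivAt_const x (1:ℝ)).sub (hasDerivAt_id x)).add
            ((hasDerivAt_pow 2 x).div_const 2)).sub ((hasDerivAt_pow 3 x).div_const 6)
            |>.congr_deriv (by norm_num)
        exact this.congr_deriv (by ring)
      exact ((h1.sub h2).congr_deriv (by ring)).hasDerivWithinAt
    · intro x hx
      rw [interior_Ici] at hx
      have := expneg_le_quad (le_of_lt hx)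
      linarith
  have h0 : (0:ℝ) ∈ Ici (0:ℝ) := mem_Ici.2 (le_refl 0)
  have := key h0 (mem_Ici.2 ht) ht
  simp at this
  linarith

lemma expneg_le_quartic {t : ℝ} (ht : 0 ≤ t) :
    Real.exp (-t) ≤ 1 - t + t^2/2 - t^3/6 + t^4/24 := by
  have key : MonotoneOn (fun t : ℝ => (1 - t + t^2/2 - t^3/6 + t^4/24) - Real.exp (-t)) (Ici 0) := by
    apply monotoneOn_of_hasDerivWithinAt_nonneg (convex_Ici 0)
      (f' := fun t => Real.exp (-t) - (1 - t + t^2/2 - t^3/6))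
    · apply Continuous.continuousOn; continuity
    · intro x hx
      have h1 : HasDerivAt (fun t : ℝ => Real.exp (-t)) (-Real.exp (-x)) x := by
        exact (hasDerivAt_neg x).exp.congr_deriv (by ring)
      have h2 : HasDerivAt (fun t : ℝ => 1 - t + t^2/2 - t^3/6 + t^4/24)
          (0 - 1 + 2*x^1/2 - 3*x^2/6 + 4*x^3/24) x :=
        ((((hasDerivAt_const x (1:ℝ)).sub (hasDerivAt_id x)).add
          ((hasDerivAt_pow 2 x).div_const 2)).sub ((hasDerivAt_pow 3 x).div_const 6)).add
          ((hasDerivAt_pow 4 x).div_const 24)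
      exact ((h2.sub h1).congr_deriv (by ring)).hasDerivWithinAt
    · intro x hx
      rw [interior_Ici] at hx
      have := expneg_ge_cubic (le_of_lt hx)
      linarith
  have := key (mem_Ici.2 (le_refl 0)) (mem_Ici.2 ht) ht
  simp at this
  linarith

noncomputable def Mf (y : ℝ) : ℝ := (y^2-4*y+2) + Real.exp (-y)*(y^2+4*y-4) + 2*Real.exp (-y)^2
noncomputable def M1 (y : ℝ) : ℝ := 2*y-4 + Real.exp (-y)*(-y^2-2*y+8) - 4*Real.exp (-y)^2
noncomputable def M2 (y : ℝ) : ℝ := 2 + Real.exp (-y)*(y^2-10) + 8*Real.exp (-y)^2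
noncomputable def M3 (y : ℝ) : ℝ := Real.exp (-y)*(-y^2+2*y+10) - 16*Real.exp (-y)^2

lemma hasDerivAt_expneg (x : ℝ) : HasDerivAt (fun y : ℝ => Real.exp (-y)) (-Real.exp (-x)) x := by
  exact (hasDerivAt_neg x).exp.congr_deriv (by ring)

lemma hasDerivAt_expneg_sq (x : ℝ) :
    HasDerivAt (fun y : ℝ => Real.exp (-y)^2) (-2*Real.exp (-x)^2) x := by
  have := (hasDerivAt_expneg x).pow 2
  exact this.congr_deriv (by ring)

lemma hasDerivAt_Mf (x : ℝ) : HasDerivAt Mf (M1 x) x := by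
  unfold Mf M1
  have hp : HasDerivAt (fun y : ℝ => y^2-4*y+2) (2*x-4) x := by
    have : HasDerivAt (fun y : ℝ => y^2-4*y+2) (2*x^1 - 4*1 + 0) x :=
      (((hasDerivAt_pow 2 x).congr_deriv (by norm_num)).sub
        ((hasDerivAt_id x).const_mul 4)).add (hasDerivAt_const x 2)
    exact this.congr_deriv (by ring)
  have hq : HasDerivAt (fun y : ℝ => y^2+4*y-4) (2*x+4) x := by
    have : HasDerivAt (fun y : ℝ => y^2+4*y-4) (2*x^1 + 4*1 - 0) x :=
      (((hasDerivAt_pow 2 x).congr_deriv (by norm_num)).add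
        ((hasDerivAt_id x).const_mul 4)).sub (hasDerivAt_const x 4)
    exact this.congr_deriv (by ring)
  have := (hp.add ((hasDerivAt_expneg x).mul hq)).add ((hasDerivAt_expneg_sq x).const_mul 2)
  exact this.congr_deriv (by ring)

lemma hasDerivAt_M1 (x : ℝ) : HasDerivAt M1 (M2 x) x := by
  unfold M1 M2
  have hp : HasDerivAt (fun y : ℝ => 2*y-4) (2:ℝ) x := by
    have : HasDerivAt (fun y : ℝ => 2*y-4) (2*1 - 0 : ℝ) x :=
      ((hasDerivAt_id x).const_mul 2).sub (hasDerivAt_const x 4)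
    exact this.congr_deriv (by ring)
  have hq : HasDerivAt (fun y : ℝ => -y^2-2*y+8) (-(2*x)-2) x := by
    have : HasDerivAt (fun y : ℝ => -y^2-2*y+8) (-(2*x^1) - 2*1 + 0) x :=
      ((((hasDerivAt_pow 2 x).congr_deriv (by norm_num)).neg).sub
        ((hasDerivAt_id x).const_mul 2)).add (hasDerivAt_const x 8)
    exact this.congr_deriv (by ring)
  have := (hp.add ((hasDerivAt_expneg x).mul hq)).sub ((hasDerivAt_expneg_sq x).const_mul 4)
  exact this.congr_deriv (by ring)

lemma hasDerivAt_M2 (x : ℝ) : HasDerivAt M2 (M3 x) x := by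
  unfold M2 M3
  have hq : HasDerivAt (fun y : ℝ => y^2-10) (2*x) x := by
    have : HasDerivAt (fun y : ℝ => y^2-10) (2*x^1 - 0) x :=
      ((hasDerivAt_pow 2 x).congr_deriv (by norm_num)).sub (hasDerivAt_const x 10)
    exact this.congr_deriv (by ring)
  have := ((hasDerivAt_const x (2:ℝ)).add ((hasDerivAt_expneg x).mul hq)).add
    ((hasDerivAt_expneg_sq x).const_mul 8)
  exact this.congr_deriv (by ring)

lemma exp_neg_half_le : Real.exp (-(1/2) : ℝ) ≤ 0.625 := by
  have hv : Real.exp ((1/2 : ℝ)) ^ 2 = Real.exp 1 := by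
    rw [← Real.exp_nat_mul]; norm_num
  have he : (2.7182818283 : ℝ) < Real.exp 1 := Real.exp_one_gt_d9
  have hvpos : 0 < Real.exp ((1/2:ℝ)) := Real.exp_pos _
  have hv16 : (1.6 : ℝ) ≤ Real.exp ((1/2:ℝ)) := by nlinarith
  rw [Real.exp_neg]
  rw [inv_le_comm₀ hvpos (by norm_num)]
  norm_num
  linarith

lemma M2_nonpos_small : ∀ y ∈ Icc (0:ℝ) (1/2), M2 y ≤ 0 := by
  intro y hy
  obtain ⟨h0, h2⟩ := hy
  have hsq : Real.exp (-y)^2 = Real.exp (-(2*y)) := by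
    rw [sq, ← Real.exp_add]; ring_nf
  have hub : Real.exp (-(2*y)) ≤ 1 - 2*y + 2*y^2 - (4/3)*y^3 + (2/3)*y^4 := by
    have := expneg_le_quartic (t := 2*y) (by linarith)
    nlinarith [this]
  have hlb : 1 - y + y^2/2 - y^3/6 ≤ Real.exp (-y) := expneg_ge_cubic h0
  have hneg : y^2 - 10 < 0 := by nlinarith
  have h1 : Real.exp (-y)*(y^2-10) ≤ (1 - y + y^2/2 - y^3/6)*(y^2-10) := by
    nlinarith [hlb, hneg]
  unfold M2
  rw [hsq]
  nlinarith [hub, h1, sq_nonneg y, sq_nonneg (y*y)]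

lemma M3_nonneg : ∀ y ∈ Icc (1/2:ℝ) 2, 0 ≤ M3 y := by
  intro y hy
  obtain ⟨h0, h2⟩ := hy
  have hmono : Real.exp (-y) ≤ Real.exp (-(1/2):ℝ) := by
    apply Real.exp_le_exp.2; linarith
  have h16 : 16 * Real.exp (-y) ≤ 10 := by
    have := exp_neg_half_le; nlinarith
  have hpos : 0 < Real.exp (-y) := Real.exp_pos _
  unfold M3
  have : Real.exp (-y)*(-y^2+2*y+10) - 16*Real.exp (-y)^2
      = Real.exp (-y) * ((-y^2+2*y+10) - 16*Real.exp (-y)) := by ring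
  rw [this]
  apply mul_nonneg (le_of_lt hpos)
  nlinarith

lemma M1_zero : M1 0 = 0 := by simp [M1, Real.exp_zero]; norm_num

lemma M1_nonpos : ∀ y ∈ Icc (0:ℝ) 2, M1 y ≤ 0 := by
  have hanti : AntitoneOn M1 (Icc (0:ℝ) (1/2)) := by
    apply antitoneOn_of_hasDerivWithinAt_nonpos (convex_Icc _ _) (f' := M2)
    · exact fun x _ => (hasDerivAt_M1 x).continuousAt.continuousWithinAt
    · intro x hx; exact (hasDerivAt_M1 x).hasDerivWithinAt
    · intro x hx
      rw [interior_Icc] at hx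
      exact M2_nonpos_small x ⟨le_of_lt hx.1, le_of_lt hx.2⟩
  have hhalf : M1 (1/2) ≤ 0 := by
    have := hanti ⟨le_refl 0, by norm_num⟩ ⟨by norm_num, le_refl _⟩ (by norm_num)
    rw [M1_zero] at this; exact this
  have htwo : M1 2 ≤ 0 := by
    unfold M1
    have h1 : (0:ℝ) < Real.exp (-2:ℝ)^2 := by positivity
    norm_num
    nlinarith
  have hconv : ConvexOn ℝ (Icc (1/2:ℝ) 2) M1 := by
    apply convexOn_of_hasDerivWithinAt2_nonneg (convex_Icc _ _) (f' := M2) (f'' := M3)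
    · exact fun x _ => (hasDerivAt_M1 x).continuousAt.continuousWithinAt
    · intro x hx; exact (hasDerivAt_M1 x).hasDerivWithinAt
    · intro x hx; exact (hasDerivAt_M2 x).hasDerivWithinAt
    · intro x hx
      rw [interior_Icc] at hx
      exact M3_nonneg x ⟨le_of_lt hx.1, le_of_lt hx.2⟩
  intro y hy
  rcases le_or_gt y (1/2) with h | h
  · have := hanti ⟨le_refl 0, by norm_num⟩ ⟨hy.1, h⟩ hy.1
    rw [M1_zero] at this; exact this
  · -- y ∈ [1/2, 2]: convex combination of endpoints
    set a : ℝ := (2 - y)/(3/2) with ha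
    set b : ℝ := (y - 1/2)/(3/2) with hb
    have hya : y = a • (1/2 : ℝ) + b • 2 := by
      simp only [smul_eq_mul, ha, hb]; ring
    have h₁ : (0:ℝ) ≤ a := by rw [ha]; apply div_nonneg <;> linarith [hy.2]
    have h₂ : (0:ℝ) ≤ b := by rw [hb]; apply div_nonneg <;> linarith
    have hab : a + b = 1 := by rw [ha, hb]; ring
    have := hconv.2 (x := (1/2:ℝ)) (y := (2:ℝ)) ⟨le_refl _, by norm_num⟩
      ⟨by norm_num, le_refl _⟩ h₁ h₂ hab
    rw [← hya] at this
    calc M1 y ≤ a * M1 (1/2) + b * M1 2 := by simpa using this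
      _ ≤ 0 := by nlinarith

lemma Mf_zero : Mf 0 = 0 := by simp [Mf, Real.exp_zero]; norm_num

lemma Mf_nonpos : ∀ y ∈ Icc (0:ℝ) 2, Mf y ≤ 0 := by
  have hanti : AntitoneOn Mf (Icc (0:ℝ) 2) := by
    apply antitoneOn_of_hasDerivWithinAt_nonpos (convex_Icc _ _) (f' := M1)
    · exact fun x _ => (hasDerivAt_Mf x).continuousAt.continuousWithinAt
    · intro x hx; exact (hasDerivAt_Mf x).hasDerivWithinAt
    · intro x hx
      rw [interior_Icc] at hx
      exact M1_nonpos x ⟨le_of_lt hx.1, le_of_lt hx.2⟩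
  intro y hy
  have := hanti ⟨le_refl 0, by norm_num⟩ hy hy.1
  rw [Mf_zero] at this; exact this

noncomputable def Rf (y : ℝ) : ℝ := y^2/(Real.exp y - 1)
noncomputable def R1 (y : ℝ) : ℝ :=
  (2*y*(Real.exp y - 1) - y^2*Real.exp y)/(Real.exp y - 1)^2
noncomputable def R2 (y : ℝ) : ℝ :=
  ((Real.exp y)^2*(y^2-4*y+2) + Real.exp y*(y^2+4*y-4) + 2)/(Real.exp y - 1)^3
noncomputable def kf (y : ℝ) : ℝ := 2 - y - 2*Real.exp (-y)

lemma D_pos {y : ℝ} (hy : 0 < y) : 0 < Real.exp y - 1 := by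
  have := Real.add_one_le_exp y; linarith

lemma hasDerivAt_Rf {y : ℝ} (hy : 0 < y) : HasDerivAt Rf (R1 y) y := by
  have hD : Real.exp y - 1 ≠ 0 := ne_of_gt (D_pos hy)
  have hnum : HasDerivAt (fun y : ℝ => y^2) (2*y) y :=
    (hasDerivAt_pow 2 y).congr_deriv (by norm_num)
  have hden : HasDerivAt (fun y : ℝ => Real.exp y - 1) (Real.exp y) y :=
    (Real.hasDerivAt_exp y).sub_const 1
  exact (hnum.div hden hD).congr_deriv (by unfold R1; ring)

lemma hasDerivAt_R1 {y : ℝ} (hy : 0 < y) : HasDerivAt R1 (R2 y) y := by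
  have hD : Real.exp y - 1 ≠ 0 := ne_of_gt (D_pos hy)
  have hA : HasDerivAt (fun y : ℝ => 2*y*(Real.exp y - 1) - y^2*Real.exp y)
      (2*(Real.exp y - 1) - y^2*Real.exp y) y := by
    have h1 : HasDerivAt (fun y : ℝ => 2*y) (2:ℝ) y := by
      simpa using (hasDerivAt_id y).const_mul (2:ℝ)
    have h2 : HasDerivAt (fun y : ℝ => Real.exp y - 1) (Real.exp y) y :=
      (Real.hasDerivAt_exp y).sub_const 1
    have h3 : HasDerivAt (fun y : ℝ => y^2) (2*y) y :=
      (hasDerivAt_pow 2 y).congr_deriv (by norm_num)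
    exact ((h1.mul h2).sub (h3.mul (Real.hasDerivAt_exp y))).congr_deriv (by ring)
  have hB : HasDerivAt (fun y : ℝ => (Real.exp y - 1)^2) (2*(Real.exp y - 1)*Real.exp y) y := by
    have h2 : HasDerivAt (fun y : ℝ => Real.exp y - 1) (Real.exp y) y :=
      (Real.hasDerivAt_exp y).sub_const 1
    exact (h2.pow 2).congr_deriv (by ring)
  have hB0 : (Real.exp y - 1)^2 ≠ 0 := pow_ne_zero _ hD
  have := hA.div hB hB0
  apply this.congr_deriv
  unfold R2
  field_simp
  ring

lemma exp_mul_expneg (y : ℝ) : Real.exp y * Real.exp (-y) = 1 := by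
  rw [← Real.exp_add]; simp

lemma R2_nonpos {y : ℝ} (hy : 0 < y) (hy2 : y ≤ 2) : R2 y ≤ 0 := by
  have hM := Mf_nonpos y ⟨le_of_lt hy, hy2⟩
  have hE : Real.exp y * Real.exp (-y) = 1 := exp_mul_expneg y
  have hnum : (Real.exp y)^2*(y^2-4*y+2) + Real.exp y*(y^2+4*y-4) + 2
      = (Real.exp y)^2 * Mf y := by
    unfold Mf
    linear_combination (-((y^2+4*y-4)*Real.exp y + 2*(1 + Real.exp y * Real.exp (-y)))) * hE
  unfold R2
  rw [hnum]
  apply div_nonpos_of_nonpos_of_nonneg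
  · exact mul_nonpos_of_nonneg_of_nonpos (sq_nonneg _) hM
  · exact le_of_lt (pow_pos (D_pos hy) 3)

lemma R1_antitoneOn : AntitoneOn R1 (Ioc (0:ℝ) 2) := by
  apply antitoneOn_of_hasDerivWithinAt_nonpos (convex_Ioc _ _) (f' := R2)
  · exact fun x hx => ((hasDerivAt_R1 hx.1).continuousAt).continuousWithinAt
  · intro x hx
    rw [interior_Ioc] at hx
    exact (hasDerivAt_R1 hx.1).hasDerivWithinAt
  · intro x hx
    rw [interior_Ioc] at hx
    exact R2_nonpos hx.1 (le_of_lt hx.2)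

lemma hasDerivAt_kf (x : ℝ) : HasDerivAt kf (-1 + 2*Real.exp (-x)) x := by
  unfold kf
  have := ((hasDerivAt_const x (2:ℝ)).sub (hasDerivAt_id x)).sub
    ((hasDerivAt_expneg x).const_mul 2)
  exact this.congr_deriv (by ring)

lemma kf_nonneg_of_root {Y : ℝ} (hY : 0 < Y) (hroot : kf Y = 0) :
    ∀ y ∈ Ioc (0:ℝ) Y, 0 ≤ kf y := by
  have hmono : MonotoneOn kf (Icc (0:ℝ) (Real.log 2)) := by
    apply monotoneOn_of_hasDerivWithinAt_nonneg (convex_Icc _ _)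
      (f' := fun x => -1 + 2*Real.exp (-x))
    · exact fun x _ => (hasDerivAt_kf x).continuousAt.continuousWithinAt
    · exact fun x _ => (hasDerivAt_kf x).hasDerivWithinAt
    · intro x hx
      rw [interior_Icc] at hx
      have h1 : Real.exp (-Real.log 2) ≤ Real.exp (-x) := Real.exp_le_exp.2 (by linarith [hx.2])
      have h2 : Real.exp (-Real.log 2) = 1/2 := by
        rw [Real.exp_neg, Real.exp_log two_pos]; norm_num
      rw [h2] at h1
      linarith
  have hanti : AntitoneOn kf (Ici (Real.log 2)) := by
    apply antitoneOn_of_hasDerivWithinAt_nonpos (convex_Ici _)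
      (f' := fun x => -1 + 2*Real.exp (-x))
    · exact fun x _ => (hasDerivAt_kf x).continuousAt.continuousWithinAt
    · exact fun x _ => (hasDerivAt_kf x).hasDerivWithinAt
    · intro x hx
      rw [interior_Ici] at hx
      have h1 : Real.exp (-x) ≤ Real.exp (-Real.log 2) :=
        Real.exp_le_exp.2 (by have := mem_Ioi.1 hx; linarith)
      have h2 : Real.exp (-Real.log 2) = 1/2 := by
        rw [Real.exp_neg, Real.exp_log two_pos]; norm_num
      rw [h2] at h1
      linarith
  have hk0 : kf 0 = 0 := by simp [kf, Real.exp_zero]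
  have hlog2pos : 0 < Real.log 2 := Real.log_pos (by norm_num)
  intro y hy
  rcases le_or_gt y (Real.log 2) with h | h
  · have := hmono ⟨le_refl 0, le_of_lt hlog2pos⟩ ⟨le_of_lt hy.1, h⟩ (le_of_lt hy.1)
    rw [hk0] at this; exact this
  · have hYln : Real.log 2 ≤ Y := le_trans (le_of_lt h) hy.2
    have := hanti (mem_Ici.2 (le_of_lt h)) (mem_Ici.2 hYln) hy.2
    rw [hroot] at this; exact this

lemma R1_num_eq (y : ℝ) :
    2*y*(Real.exp y - 1) - y^2*Real.exp y = y * Real.exp y * kf y := by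
  unfold kf
  have hE := exp_mul_expneg y
  linear_combination (2*y) * hE

lemma R1_nonneg_of_root {Y : ℝ} (hY : 0 < Y) (hroot : kf Y = 0) :
    ∀ y ∈ Ioc (0:ℝ) Y, 0 ≤ R1 y := by
  intro y hy
  have hk := kf_nonneg_of_root hY hroot y hy
  unfold R1
  rw [R1_num_eq]
  apply div_nonneg _ (sq_nonneg _)
  exact mul_nonneg (le_of_lt (mul_pos hy.1 (Real.exp_pos y))) hk

lemma R1_nonpos_big {y : ℝ} (hy : 2 ≤ y) : R1 y ≤ 0 := by
  have hk : kf y ≤ 0 := by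
    unfold kf
    have := Real.exp_pos (-y)
    nlinarith
  unfold R1
  rw [R1_num_eq]
  apply div_nonpos_of_nonpos_of_nonneg _ (sq_nonneg _)
  exact mul_nonpos_of_nonneg_of_nonpos (by positivity) hk

lemma Rf_antitone_big : AntitoneOn Rf (Ici (2:ℝ)) := by
  apply antitoneOn_of_hasDerivWithinAt_nonpos (convex_Ici _) (f' := R1)
  · exact fun x hx => ((hasDerivAt_Rf (lt_of_lt_of_le two_pos hx)).continuousAt).continuousWithinAt
  · intro x hx
    rw [interior_Ici] at hx
    exact (hasDerivAt_Rf (lt_trans two_pos hx)).hasDerivWithinAt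
  · intro x hx
    rw [interior_Ici] at hx
    exact R1_nonpos_big (le_of_lt hx)

lemma root_lt_two {Y : ℝ} (hroot : kf Y = 0) : Y < 2 := by
  have := Real.exp_pos (-Y)
  unfold kf at hroot
  linarith

lemma tangent_bound {Y : ℝ} (hY : 0 < Y) (hroot : kf Y = 0) {y0 : ℝ}
    (hy0 : y0 ∈ Ioc (0:ℝ) Y) :
    ∀ y : ℝ, 0 < y → Rf y ≤ Rf y0 + R1 y0 * (y - y0) := by
  have hY2 : Y < 2 := root_lt_two hroot
  have hy0m : y0 ∈ Ioc (0:ℝ) 2 := ⟨hy0.1, le_of_lt (lt_of_le_of_lt hy0.2 hY2)⟩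
  have hβ : 0 ≤ R1 y0 := R1_nonneg_of_root hY hroot y0 hy0
  set φ : ℝ → ℝ := fun y => Rf y0 + R1 y0*(y - y0) - Rf y with hφ
  have hφd : ∀ x : ℝ, 0 < x → HasDerivAt φ (R1 y0 - R1 x) x := by
    intro x hx
    have h1 : HasDerivAt (fun y : ℝ => Rf y0 + R1 y0*(y - y0)) (R1 y0) x := by
      have := (hasDerivAt_const x (Rf y0)).add
        (((hasDerivAt_id x).sub_const y0).const_mul (R1 y0))
      exact this.congr_deriv (by ring)
    exact h1.sub (hasDerivAt_Rf hx)
  have hφ0 : φ y0 = 0 := by simp [hφ]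
  have anti1 : AntitoneOn φ (Ioc 0 y0) := by
    apply antitoneOn_of_hasDerivWithinAt_nonpos (convex_Ioc _ _)
      (f' := fun x => R1 y0 - R1 x)
    · exact fun x hx => (hφd x hx.1).continuousAt.continuousWithinAt
    · intro x hx
      rw [interior_Ioc] at hx
      exact (hφd x hx.1).hasDerivWithinAt
    · intro x hx
      rw [interior_Ioc] at hx
      have := R1_antitoneOn ⟨hx.1, le_trans (le_of_lt hx.2) hy0m.2⟩ hy0m (le_of_lt hx.2)
      linarith
  have mono2 : MonotoneOn φ (Icc y0 2) := by
    apply monotoneOn_of_hasDerivWithinAt_nonneg (convex_Icc _ _)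
      (f' := fun x => R1 y0 - R1 x)
    · exact fun x hx => (hφd x (lt_of_lt_of_le hy0.1 hx.1)).continuousAt.continuousWithinAt
    · intro x hx
      rw [interior_Icc] at hx
      exact (hφd x (lt_trans hy0.1 hx.1)).hasDerivWithinAt
    · intro x hx
      rw [interior_Icc] at hx
      have := R1_antitoneOn hy0m ⟨lt_trans hy0.1 hx.1, le_of_lt hx.2⟩ (le_of_lt hx.1)
      linarith
  intro y hy
  rcases le_or_gt y y0 with h | h
  · have := anti1 ⟨hy, h⟩ ⟨hy0.1, le_refl _⟩ h
    rw [hφ0] at this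
    simp only [hφ] at this
    linarith
  · rcases le_or_gt y 2 with h2 | h2
    · have := mono2 ⟨le_refl _, hy0m.2⟩ ⟨le_of_lt h, h2⟩ (le_of_lt h)
      rw [hφ0] at this
      simp only [hφ] at this
      linarith
    · have hR2 : Rf y ≤ Rf 2 := Rf_antitone_big (mem_Ici.2 (le_refl 2)) (mem_Ici.2 (le_of_lt h2))
        (le_of_lt h2)
      have hφ2 : 0 ≤ φ 2 := by
        have := mono2 ⟨le_refl _, hy0m.2⟩ ⟨hy0m.2, le_refl _⟩ hy0m.2
        rw [hφ0] at this; exact this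
      simp only [hφ] at hφ2
      nlinarith [mul_le_mul_of_nonneg_left (le_of_lt h2) hβ]
  done

lemma rf_transfer {y : ℝ} (hy : 0 < y) :
    y^2 * Real.exp (-y) / (1 - Real.exp (-y)) = Rf y := by
  have h1 : 1 - Real.exp (-y) ≠ 0 := by
    have : Real.exp (-y) < 1 := Real.exp_lt_one_iff.2 (by linarith)
    linarith
  have h2 : Real.exp y - 1 ≠ 0 := ne_of_gt (D_pos hy)
  have hE := exp_mul_expneg y
  unfold Rf
  rw [div_eq_div_iff h1 h2]
  linear_combination (y^2) * hE

lemma design_bound (n : ℕ) (xs : ℝ) (f : ℝ → ℝ)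
    (hfm : Measurable f) (C : ℝ) (hfC : ∀ x ∈ Ioc (0:ℝ) 1, |f x| ≤ C)
    (b : ℝ) (hb : 0 ≤ b) (hmaj : ∀ x ∈ Ioc (0:ℝ) 1, f x ≤ f xs + b*(x - xs))
    (hb2 : b * (1 - n*xs) ≤ 0)
    (μ : Measure ℝ) (hμ1 : μ (Ioc 0 1) = n)
    (hμx : (∫ x in Ioc (0:ℝ) 1, x ∂μ) ≤ 1) :
    (∫ x in Ioc (0:ℝ) 1, f x ∂μ) ≤ n * f xs := by
  have hfin : IsFiniteMeasure (μ.restrict (Ioc (0:ℝ) 1)) := by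
    constructor
    rw [Measure.restrict_apply_univ, hμ1]
    exact ENNReal.natCast_lt_top n
  have hxint : Integrable (fun x => x) (μ.restrict (Ioc (0:ℝ) 1)) := by
    apply Integrable.mono' (integrable_const (1:ℝ)) measurable_id.aestronglyMeasurable
    rw [ae_restrict_iff' measurableSet_Ioc]
    filter_upwards with x hx
    simp only [id_eq, Real.norm_eq_abs]
    rw [abs_of_pos hx.1]
    exact hx.2
  have hfint : Integrable f (μ.restrict (Ioc (0:ℝ) 1)) := by
    apply Integrable.mono' (integrable_const C) hfm.aestronglyMeasurable
    rw [ae_restrict_iff' measurableSet_Ioc]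
    filter_upwards with x hx
    rw [Real.norm_eq_abs]
    exact hfC x hx
  have hgint : Integrable (fun x => (f xs - b*xs) + b*x) (μ.restrict (Ioc (0:ℝ) 1)) :=
    (integrable_const _).add (hxint.const_mul b)
  have hmono : (∫ x in Ioc (0:ℝ) 1, f x ∂μ) ≤ ∫ x in Ioc (0:ℝ) 1, ((f xs - b*xs) + b*x) ∂μ := by
    apply integral_mono_ae hfint hgint
    rw [Filter.EventuallyLE, ae_restrict_iff' measurableSet_Ioc]
    filter_upwards with x hx
    have := hmaj x hx
    linarith
  have hgval : (∫ x in Ioc (0:ℝ) 1, ((f xs - b*xs) + b*x) ∂μ)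
      = (n : ℝ) * (f xs - b*xs) + b * ∫ x in Ioc (0:ℝ) 1, x ∂μ := by
    rw [integral_add (integrable_const _) (hxint.const_mul b), integral_const,
      integral_const_mul, measureReal_def, Measure.restrict_apply_univ, hμ1]
    simp [smul_eq_mul]
  have hx0 : b * (∫ x in Ioc (0:ℝ) 1, x ∂μ) ≤ b * 1 := by
    apply mul_le_mul_of_nonneg_left hμx hb
  calc (∫ x in Ioc (0:ℝ) 1, f x ∂μ)
      ≤ (n : ℝ) * (f xs - b*xs) + b * ∫ x in Ioc (0:ℝ) 1, x ∂μ := by rw [← hgval]; exact hmono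
    _ ≤ (n : ℝ) * (f xs - b*xs) + b := by linarith
    _ = (n : ℝ) * f xs + b * (1 - n*xs) := by ring
    _ ≤ (n : ℝ) * f xs := by linarith

/-- For fixed `λ > 0` and `n` mice, with `y_max` the unique maximizer of
`r(y) = y² e^{-y}/(1 - e^{-y})` on `(0, ∞)`, the one-atom design `μ* = n δ_{x*}`
with `x* = min(1/n, y_max/λ)` maximizes the Fisher information
`I(μ; λ) = ∫ x² e^{-λx}/(1 - e^{-λx}) dμ(x)` over all design measures `μ`
on `(0,1]` with total mass `n` and total volume `∫ x dμ ≤ 1`; in particular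
the optimal design is `n` equal doses of volume `1/n` when `λ ≤ y_max n`
and of volume `y_max/λ` when `λ > y_max n`. -/
theorem stmt3 (lam : ℝ) (hlam : 0 < lam) (n : ℕ) (hn : 0 < n)
    (ymax : ℝ) (hymaxpos : 0 < ymax)
    (hmax : ∀ y : ℝ, 0 < y → y ≠ ymax →
      y ^ 2 * Real.exp (-y) / (1 - Real.exp (-y)) <
        ymax ^ 2 * Real.exp (-ymax) / (1 - Real.exp (-ymax))) :
    let xstar : ℝ := min (1 / (n : ℝ)) (ymax / lam)
    let f : ℝ → ℝ := fun x => x ^ 2 * Real.exp (-(lam * x)) / (1 - Real.exp (-(lam * x)))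
    (∀ μ : Measure ℝ,
        μ (Set.Ioc 0 1) = n → μ (Set.Ioc 0 1)ᶜ = 0 →
        (∫ x in Set.Ioc (0 : ℝ) 1, x ∂μ) ≤ 1 →
        (∫ x in Set.Ioc (0 : ℝ) 1, f x ∂μ) ≤ (n : ℝ) * f xstar)
    ∧ ((n : ℝ≥0∞) • Measure.dirac xstar) (Set.Ioc 0 1) = n
    ∧ (∫ x in Set.Ioc (0 : ℝ) 1, x ∂((n : ℝ≥0∞) • Measure.dirac xstar)) ≤ 1
    ∧ (lam ≤ ymax * n → xstar = 1 / (n : ℝ))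
    ∧ (ymax * n < lam → xstar = ymax / lam) := by
  intro xstar f
  have hnpos : (0:ℝ) < n := Nat.cast_pos.2 hn
  have hn1 : (1:ℝ) ≤ n := Nat.one_le_cast.2 hn
  have hxspos : 0 < xstar := lt_min (by positivity) (by positivity)
  have hxsle : xstar ≤ 1/(n:ℝ) := min_le_left _ _
  have hxs1 : xstar ≤ 1 := le_trans hxsle (by rw [div_le_one hnpos]; exact hn1)
  have hmem : xstar ∈ Ioc (0:ℝ) 1 := ⟨hxspos, hxs1⟩
  -- transfer of hmax to Rf
  have hRmax : ∀ y : ℝ, 0 < y → Rf y ≤ Rf ymax := by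
    intro y hy
    rcases eq_or_ne y ymax with rfl | hne
    · exact le_refl _
    · have := hmax y hy hne
      rw [rf_transfer hy, rf_transfer hymaxpos] at this
      exact le_of_lt this
  -- critical point equation
  have hroot : kf ymax = 0 := by
    have hloc : IsLocalMax Rf ymax := by
      filter_upwards [isOpen_Ioi.mem_nhds (mem_Ioi.2 hymaxpos)] with y hy
      exact hRmax y hy
    have hd : deriv Rf ymax = R1 ymax := (hasDerivAt_Rf hymaxpos).deriv
    have h0 : R1 ymax = 0 := by rw [← hd]; exact hloc.deriv_eq_zero
    unfold R1 at h0
    rw [div_eq_zero_iff] at h0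
    rcases h0 with h0 | h0
    · rw [R1_num_eq] at h0
      rcases mul_eq_zero.1 h0 with h1 | h1
      · exfalso
        have : (0:ℝ) < ymax * Real.exp ymax := by positivity
        rw [h1] at this; exact lt_irrefl 0 this
      · exact h1
    · exfalso
      exact pow_ne_zero 2 (ne_of_gt (D_pos hymaxpos)) h0
  -- f in terms of Rf
  have hf_eq : ∀ x : ℝ, 0 < x → f x = Rf (lam*x) / lam^2 := by
    intro x hx
    have ht : 0 < lam*x := mul_pos hlam hx
    show x ^ 2 * Real.exp (-(lam * x)) / (1 - Real.exp (-(lam * x))) = Rf (lam*x) / lam^2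
    rw [← rf_transfer ht]
    have h1 : 1 - Real.exp (-(lam*x)) ≠ 0 := by
      have : Real.exp (-(lam*x)) < 1 := Real.exp_lt_one_iff.2 (by linarith)
      linarith
    field_simp
  -- pointwise majorant
  have hmaj : ∃ b : ℝ, 0 ≤ b ∧ (∀ x ∈ Ioc (0:ℝ) 1, f x ≤ f xstar + b*(x - xstar)) ∧
      b * (1 - n*xstar) ≤ 0 := by
    rcases le_total (1/(n:ℝ)) (ymax/lam) with hA | hB
    · -- xstar = 1/n, tangent line case
      have hxe : xstar = 1/(n:ℝ) := min_eq_left hA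
      set y0 : ℝ := lam * xstar with hy0
      have hy0pos : 0 < y0 := mul_pos hlam hxspos
      have hy0le : y0 ≤ ymax := by
        rw [hy0, hxe]
        rw [le_div_iff₀ hlam] at hA
        linarith [hA]
      refine ⟨R1 y0 / lam, ?_, ?_, ?_⟩
      · exact div_nonneg (R1_nonneg_of_root hymaxpos hroot y0 ⟨hy0pos, hy0le⟩) (le_of_lt hlam)
      · intro x hx
        have ht : 0 < lam*x := mul_pos hlam hx.1
        have htan := tangent_bound hymaxpos hroot (y0 := y0) ⟨hy0pos, hy0le⟩ (lam*x) ht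
        rw [hf_eq x hx.1, hf_eq xstar hxspos]
        rw [div_add' _ _ _ (by positivity)] at *
        rw [div_le_div_iff₀ (by positivity) (by positivity)]
        have hexp : R1 y0 / lam * (x - xstar) * lam^2 = R1 y0 * (lam*x - y0) := by
          field_simp [hy0]; ring
        nlinarith [htan]
      · have : (n:ℝ) * xstar = 1 := by rw [hxe]; field_simp
        rw [this]
        simp
    · -- xstar = ymax/lam, flat case
      have hxe : xstar = ymax/lam := min_eq_right hB
      have hlx : lam * xstar = ymax := by rw [hxe]; field_simp
      refine ⟨0, le_refl _, ?_, by simp⟩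
      intro x hx
      have ht : 0 < lam*x := mul_pos hlam hx.1
      rw [hf_eq x hx.1, hf_eq xstar hxspos, hlx]
      have := hRmax (lam*x) ht
      have hl2 : (0:ℝ) < lam^2 := by positivity
      calc Rf (lam*x)/lam^2 ≤ Rf ymax/lam^2 := by apply div_le_div_of_nonneg_right this (le_of_lt hl2)
        _ = Rf ymax/lam^2 + 0*(x - xstar) := by ring
  obtain ⟨b, hb, hmaj', hb2⟩ := hmaj
  refine ⟨?_, ?_, ?_, ?_, ?_⟩
  · -- main inequality
    intro μ hμ1 hμc hμx
    apply design_bound n xstar f ?_ (Rf ymax / lam^2) ?_ b hb hmaj' hb2 μ hμ1 hμx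
    · show Measurable fun x => x ^ 2 * Real.exp (-(lam * x)) / (1 - Real.exp (-(lam * x)))
      apply Measurable.div
      · exact (measurable_id.pow_const 2).mul
          ((Real.measurable_exp.comp ((measurable_id.const_mul lam).neg)))
      · exact (measurable_const.sub (Real.measurable_exp.comp ((measurable_id.const_mul lam).neg)))
    · intro x hx
      have ht : 0 < lam*x := mul_pos hlam hx.1
      rw [hf_eq x hx.1]
      have hR0 : 0 ≤ Rf (lam*x) := by
        unfold Rf
        exact div_nonneg (sq_nonneg _) (le_of_lt (D_pos ht))
      rw [abs_of_nonneg (by positivity)]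
      exact div_le_div_of_nonneg_right (hRmax (lam*x) ht) (by positivity)
  · -- dirac mass
    rw [Measure.smul_apply, Measure.dirac_apply' _ measurableSet_Ioc,
      Set.indicator_of_mem hmem]
    simp
  · -- dirac volume
    have hres : ((n : ℝ≥0∞) • Measure.dirac xstar).restrict (Ioc (0:ℝ) 1)
        = (n : ℝ≥0∞) • Measure.dirac xstar := by
      rw [Measure.restrict_smul, MeasureTheory.restrict_dirac' measurableSet_Ioc, if_pos hmem]
    rw [hres, integral_smul_measure, integral_dirac]
    simp only [ENNReal.toReal_natCast, smul_eq_mul]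
    calc (n:ℝ) * xstar ≤ (n:ℝ) * (1/(n:ℝ)) := by
          exact mul_le_mul_of_nonneg_left hxsle (le_of_lt hnpos)
      _ = 1 := by field_simp
  · intro h
    apply min_eq_left
    rw [div_le_div_iff₀ hnpos hlam]
    linarith
  · intro h
    apply min_eq_right
    rw [div_le_div_iff₀ hlam hnpos]
    linarith
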